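/- Let V ⊂ C be a 2-dimensional Q-vector subspace with two R-linearly independent vectors. The following are equivalent: (i) V is homothetic to conj(V); (ii) V is homothetic to Q·1 + Q·τ for some τ ∈ C \ R with |τ|² ∈ Q. -/

import Mathlib

/-!
Both conditions are invariant under homothety, so we may replace `V` by `L = span ℚ {1, τ}` with
`τ ∉ ℝ`. If `|τ|² = q ∈ ℚ`, then `conj τ = q / τ`, hence `τ • conj L = span ℚ {τ, q} = L`.
Conversely, if `c • L = conj L`, then `conj c ∈ L` and `conj c * c ∈ conj c • conj L = L`, so
`|c|² ∈ L ∩ ℝ = ℚ`. If `conj c ∉ ℝ` it generates `L` together with `1`. Otherwise `c ∈ ℚ`, so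
`L` is self-conjugate: then `Re τ ∈ ℚ`, `L = span ℚ {1, t}` with `t` purely imaginary, and
`(1 + t)⁻¹ • L = span ℚ {1, (1 - t) / (1 + t)}`, where the Cayley transform `(1 - t) / (1 + t)`
has modulus `1`.
-/

open Complex Pointwise Submodule

noncomputable def conjSubmodule (V : Submodule ℚ ℂ) : Submodule ℚ ℂ :=
  V.map (starRingEnd ℂ).toRatAlgHom.toLinearMap

def IsHomothetic (V W : Submodule ℚ ℂ) : Prop :=
  ∃ l : ℂ, l ≠ 0 ∧ l • V = W

lemma coe_conjSubmodule (V : Submodule ℚ ℂ) :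
    (conjSubmodule V : Set ℂ) = (fun z : ℂ => starRingEnd ℂ z) '' (V : Set ℂ) :=
  Submodule.map_coe _ _

lemma mem_conjSubmodule {V : Submodule ℚ ℂ} {z : ℂ} :
    z ∈ conjSubmodule V ↔ starRingEnd ℂ z ∈ V := by
  refine ⟨?_, fun h => ⟨_, h, conj_conj z⟩⟩
  rintro ⟨y, hy, rfl⟩
  simpa using hy

lemma conjSubmodule_conjSubmodule (V : Submodule ℚ ℂ) : conjSubmodule (conjSubmodule V) = V := by
  ext z; simp [mem_conjSubmodule]

lemma conjSubmodule_smul (c : ℂ) (V : Submodule ℚ ℂ) :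
    conjSubmodule (c • V) = starRingEnd ℂ c • conjSubmodule V :=
  SetLike.coe_injective <| by
    simp only [coe_conjSubmodule, coe_pointwise_smul]
    exact Set.image_smul_distrib (starRingEnd ℂ) c V

lemma conjSubmodule_span_pair (x y : ℂ) :
    conjSubmodule (span ℚ {x, y}) = span ℚ {starRingEnd ℂ x, starRingEnd ℂ y} := by
  rw [conjSubmodule, map_span, Set.image_pair]
  rfl

namespace IsHomothetic

variable {U V W : Submodule ℚ ℂ}

lemma refl (V : Submodule ℚ ℂ) : IsHomothetic V V :=
  ⟨1, one_ne_zero, one_smul ℂ V⟩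

lemma symm : IsHomothetic V W → IsHomothetic W V := by
  rintro ⟨l, hl, rfl⟩
  exact ⟨l⁻¹, inv_ne_zero hl, inv_smul_smul₀ hl V⟩

lemma trans : IsHomothetic U V → IsHomothetic V W → IsHomothetic U W := by
  rintro ⟨l, hl, rfl⟩ ⟨m, hm, rfl⟩
  exact ⟨m * l, mul_ne_zero hm hl, mul_smul m l U⟩

lemma conj : IsHomothetic V W → IsHomothetic (conjSubmodule V) (conjSubmodule W) := by
  rintro ⟨l, hl, rfl⟩
  exact ⟨starRingEnd ℂ l, (map_ne_zero _).mpr hl, (conjSubmodule_smul l V).symm⟩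

end IsHomothetic

lemma image_mul_left_eq_coe_smul (l : ℂ) (V : Submodule ℚ ℂ) :
    (fun z : ℂ => l * z) '' (V : Set ℂ) = ((l • V : Submodule ℚ ℂ) : Set ℂ) := by
  rw [coe_pointwise_smul, ← Set.image_smul]
  rfl

lemma forall_ne_ofReal_iff_im_ne_zero {z : ℂ} : (∀ r : ℝ, z ≠ r) ↔ z.im ≠ 0 :=
  ⟨fun h him => h z.re (Complex.ext rfl him), fun h r hr => h (by simp [hr])⟩

lemma Submodule.span_pair_add_sub {K M : Type*} [DivisionRing K] [CharZero K] [AddCommGroup M]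
    [Module K M] (x y : M) : span K {x + y, x - y} = span K {x, y} := by
  have hx : x ∈ span K {x, y} := subset_span (by simp)
  have hy : y ∈ span K {x, y} := subset_span (by simp)
  refine le_antisymm (span_le.mpr ?_) (span_le.mpr ?_)
  · exact Set.pair_subset_iff.mpr ⟨add_mem hx hy, sub_mem hx hy⟩
  · have hp : x + y ∈ span K {x + y, x - y} := subset_span (by simp)
    have hm : x - y ∈ span K {x + y, x - y} := subset_span (by simp)
    have hx' := smul_mem _ (2 : K)⁻¹ (add_mem hp hm)
    have hy' := smul_mem _ (2 : K)⁻¹ (sub_mem hp hm)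
    rw [add_add_sub_cancel, ← two_smul K x, inv_smul_smul₀ two_ne_zero] at hx'
    rw [add_sub_sub_cancel, ← two_smul K y, inv_smul_smul₀ two_ne_zero] at hy'
    exact Set.pair_subset_iff.mpr ⟨hx', hy'⟩

lemma Submodule.span_pair_eq_of_finrank_eq_two {K M : Type*} [DivisionRing K] [AddCommGroup M]
    [Module K M] {V : Submodule K M} (hV : Module.finrank K V = 2) {v w : M} (hv : v ∈ V)
    (hw : w ∈ V) (hvw : LinearIndependent K ![v, w]) : span K {v, w} = V := by
  have : FiniteDimensional K V := .of_finrank_pos (by omega)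
  refine eq_of_le_of_finrank_le (span_le.mpr (Set.pair_subset_iff.mpr ⟨hv, hw⟩)) ?_
  rw [hV, ← Matrix.range_cons_cons_empty, finrank_span_eq_card hvw, Fintype.card_fin]

lemma inv_smul_span_pair {a : ℂ} (ha : a ≠ 0) (b : ℂ) :
    a⁻¹ • span ℚ {a, b} = span ℚ {1, b / a} := by
  rw [smul_span, Set.smul_set_insert, Set.smul_set_singleton, smul_eq_mul, smul_eq_mul,
    inv_mul_cancel₀ ha, div_eq_inv_mul]

section SpanOnePair

variable {τ : ℂ}

lemma exists_rat_eq_of_mem_span_one_pair (hτ : τ.im ≠ 0) {z : ℂ} (hz : z ∈ span ℚ {1, τ})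
    (hz' : z.im = 0) : ∃ q : ℚ, z = q := by
  obtain ⟨a, b, rfl⟩ := mem_span_pair.mp hz
  have hb : b = 0 := by simpa [Rat.smul_def, hτ] using hz'
  exact ⟨a, by simp [hb, Rat.smul_def]⟩

lemma span_one_pair_eq_of_mem {σ : ℂ} (hσ : σ ∈ span ℚ {1, τ}) (hσ' : σ.im ≠ 0) :
    span ℚ {1, σ} = span ℚ {1, τ} := by
  obtain ⟨a, b, rfl⟩ := mem_span_pair.mp hσ
  have hb : b ≠ 0 := by rintro rfl; simp [Rat.smul_def] at hσ'
  have h1 : (1 : ℂ) ∈ span ℚ {1, a • 1 + b • τ} := subset_span (by simp)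
  have hab : a • 1 + b • τ ∈ span ℚ {1, a • 1 + b • τ} := subset_span (by simp)
  refine le_antisymm (span_le.mpr (Set.pair_subset_iff.mpr ⟨subset_span (by simp), hσ⟩))
    (span_le.mpr (Set.pair_subset_iff.mpr ⟨h1, ?_⟩))
  have := smul_mem _ b⁻¹ (sub_mem hab (smul_mem _ a h1))
  rwa [add_sub_cancel_left, inv_smul_smul₀ hb] at this

lemma isHomothetic_conjSubmodule_span_one_pair (hτ : τ ≠ 0) {q : ℚ} (hq : normSq τ = q) :
    IsHomothetic (conjSubmodule (span ℚ {1, τ})) (span ℚ {1, τ}) := by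
  have hq0 : q ≠ 0 := by rintro rfl; simp_all
  refine ⟨τ, hτ, ?_⟩
  rw [conjSubmodule_span_pair, smul_span, Set.smul_set_insert, Set.smul_set_singleton, smul_eq_mul,
    smul_eq_mul, map_one, mul_one, mul_conj, hq, ofReal_ratCast, ← Rat.smul_one_eq_cast,
    Set.pair_comm, span_insert, span_singleton_smul_eq (isUnit_iff_ne_zero.mpr hq0), ← span_insert]

lemma exists_isHomothetic_of_conj_mem (hτ : τ.im ≠ 0) (h : starRingEnd ℂ τ ∈ span ℚ {1, τ}) :
    ∃ σ : ℂ, σ.im ≠ 0 ∧ normSq σ = 1 ∧ IsHomothetic (span ℚ {1, τ}) (span ℚ {1, σ}) := by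
  have h1L : (1 : ℂ) ∈ span ℚ {1, τ} := subset_span (by simp)
  have hτL : τ ∈ span ℚ {1, τ} := subset_span (by simp)
  obtain ⟨q, hq⟩ := exists_rat_eq_of_mem_span_one_pair hτ (add_mem hτL h) (by simp)
  set t := τ - (q / 2 : ℚ) • 1 with ht
  have ht_re : t.re = 0 := by
    have := congrArg re hq
    simp only [add_re, conj_re, ratCast_re] at this
    simp [ht, Rat.smul_def, ← this]
  have ht_im : t.im = τ.im := by simp [ht, Rat.smul_def]
  have htL : span ℚ {1, t} = span ℚ {1, τ} :=
    span_one_pair_eq_of_mem (sub_mem hτL (smul_mem _ _ h1L)) (ht_im ▸ hτ)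
  have h1t : 1 + t ≠ 0 := fun h0 => by simpa [ht_re] using congrArg re h0
  refine ⟨(1 - t) / (1 + t), ?_, ?_, (1 + t)⁻¹, inv_ne_zero h1t, ?_⟩
  · rw [div_im]
    simp only [sub_im, one_im, add_re, one_re, ht_re, sub_re, add_im]
    rw [div_sub_div_same]
    exact div_ne_zero (by contrapose! hτ; linarith) (normSq_pos.mpr h1t).ne'
  · rw [normSq_div, div_eq_one_iff_eq (normSq_pos.mpr h1t).ne']
    simp [normSq_apply, ht_re]
  · rw [← htL, ← span_pair_add_sub, inv_smul_span_pair h1t]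

lemma exists_isHomothetic_of_isHomothetic_conjSubmodule (hτ : τ.im ≠ 0)
    (h : IsHomothetic (span ℚ {1, τ}) (conjSubmodule (span ℚ {1, τ}))) :
    ∃ σ : ℂ, σ.im ≠ 0 ∧ (∃ q : ℚ, normSq σ = q) ∧ IsHomothetic (span ℚ {1, τ}) (span ℚ {1, σ}) := by
  set L := span ℚ {1, τ}
  obtain ⟨c, hc, hcL⟩ := h
  have hcL' : starRingEnd ℂ c • conjSubmodule L = L := by
    rw [← conjSubmodule_smul, hcL, conjSubmodule_conjSubmodule]
  have hc_mem : c ∈ conjSubmodule L := by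
    simpa [← hcL] using smul_mem_pointwise_smul (1 : ℂ) c L (subset_span (by simp))
  have hc_conj : starRingEnd ℂ c ∈ L := mem_conjSubmodule.mp hc_mem
  have h_normSq : (normSq c : ℂ) ∈ L := by
    rw [normSq_eq_conj_mul_self, ← hcL']
    exact smul_mem_pointwise_smul c _ _ hc_mem
  obtain ⟨q, hq⟩ := exists_rat_eq_of_mem_span_one_pair hτ h_normSq (ofReal_im _)
  by_cases hre : (starRingEnd ℂ c).im = 0
  · obtain ⟨r, hr⟩ := exists_rat_eq_of_mem_span_one_pair hτ hc_conj hre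
    have hr0 : r ≠ 0 := by rintro rfl; simp_all
    have hτ_conj : starRingEnd ℂ τ ∈ L := by
      have hcτ : c • τ ∈ conjSubmodule L :=
        hcL ▸ smul_mem_pointwise_smul τ c L (subset_span (by simp))
      have := smul_mem L r⁻¹ (mem_conjSubmodule.mp hcτ)
      rwa [smul_eq_mul, map_mul, hr, ← Rat.smul_def, inv_smul_smul₀ hr0] at this
    obtain ⟨σ, hσ, hσ1, hLσ⟩ := exists_isHomothetic_of_conj_mem hτ hτ_conj
    exact ⟨σ, hσ, ⟨1, by simp [hσ1]⟩, hLσ⟩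
  · refine ⟨starRingEnd ℂ c, hre, ⟨q, by rw [normSq_conj]; exact_mod_cast hq⟩, ?_⟩
    rw [span_one_pair_eq_of_mem hc_conj hre]
    exact .refl L

end SpanOnePair

lemma isHomothetic_span_one_div {V : Submodule ℚ ℂ} (hV : Module.finrank ℚ V = 2) {v w : ℂ}
    (hv : v ∈ V) (hw : w ∈ V) (hvw : LinearIndependent ℝ ![v, w]) :
    (w / v).im ≠ 0 ∧ IsHomothetic V (span ℚ {1, w / v}) := by
  have hv0 : v ≠ 0 := by simpa using hvw.ne_zero 0
  refine ⟨fun him => ?_, v⁻¹, inv_ne_zero hv0, ?_⟩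
  · have hwv : (w / v).re • v + (-1 : ℝ) • w = 0 := by
      have hre : ((w / v).re : ℂ) = w / v := Complex.ext (by simp) (by simp [him])
      rw [real_smul, hre, div_mul_cancel₀ w hv0, neg_one_smul, add_neg_cancel]
    exact absurd (LinearIndependent.pair_iff.mp hvw _ _ hwv).2 (by norm_num)
  · rw [← span_pair_eq_of_finrank_eq_two hV hv hw (hvw.restrict_scalars' ℚ), inv_smul_span_pair hv0]

/-- For a space `V` (a 2-dimensional `ℚ`-subspace of `ℂ` containing two
`ℝ`-linearly independent vectors): `V` is homothetic to its complex conjugate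
if and only if `V` is homothetic to `ℚ·1 + ℚ·τ` for some `τ ∉ ℝ` with `|τ|² ∈ ℚ`. -/
theorem homothetic_to_conjugate_iff
    (V : Submodule ℚ ℂ) (hdim : Module.finrank ℚ V = 2)
    (hind : ∃ v w : ℂ, v ∈ V ∧ w ∈ V ∧ LinearIndependent ℝ ![v, w]) :
    (∃ l : ℂ, l ≠ 0 ∧
        (fun z : ℂ => l * z) '' (V : Set ℂ) =
          (fun z : ℂ => starRingEnd ℂ z) '' (V : Set ℂ)) ↔
    (∃ l τ : ℂ, l ≠ 0 ∧ (∀ r : ℝ, τ ≠ (r : ℂ)) ∧ (∃ q : ℚ, ‖τ‖ ^ 2 = (q : ℝ)) ∧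
        (fun z : ℂ => l * z) '' (V : Set ℂ) = (Submodule.span ℚ {1, τ} : Set ℂ)) := by
  obtain ⟨v, w, hv, hw, hvw⟩ := hind
  obtain ⟨hτ, hV⟩ := isHomothetic_span_one_div hdim hv hw hvw
  simp only [image_mul_left_eq_coe_smul, ← coe_conjSubmodule, SetLike.coe_set_eq,
    forall_ne_ofReal_iff_im_ne_zero, Complex.sq_norm]
  change IsHomothetic V (conjSubmodule V) ↔ _
  constructor
  · intro hVc
    obtain ⟨σ, hσ, hq, hσV⟩ :=
      exists_isHomothetic_of_isHomothetic_conjSubmodule hτ (hV.symm.trans (hVc.trans hV.conj))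
    obtain ⟨l', hl', h'⟩ := hV.trans hσV
    exact ⟨l', σ, hl', hσ, hq, h'⟩
  · rintro ⟨l, τ, hl, hτ, ⟨q, hq⟩, h⟩
    have hVτ : IsHomothetic V (span ℚ {1, τ}) := ⟨l, hl, h⟩
    have hτ0 : τ ≠ 0 := fun h0 => hτ (by simp [h0])
    exact hVτ.trans ((isHomothetic_conjSubmodule_span_one_pair hτ0 hq).symm.trans hVτ.conj.symm)
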